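/- Let n ≥ 1 and let q : ℝ → ℂⁿ be a function. Let σ₃ = diag(1, −1, …, −1) ∈ M_{n+1}(ℂ) and, for x ∈ ℝ, let Q(x) be the matrix with Q(x)_{11} = 0, Q(x)_{1,j+1} = conj(q_j(x)), Q(x)_{i+1,1} = q_i(x), Q(x)_{i+1,j+1} = 0, and for λ ≠ 0 set U(λ;x) = i λ^{−2} σ₃ + λ^{−1} Q(x). Fix λ ∈ ℂ with λ ≠ 0. (i) If Φ : ℝ → M_{n+1}(ℂ) is differentiable with Φ'(x) = U(conj λ; x)·Φ(x) for all x, then the function Ψ(x) = σ₃ (Φ(x))^† σ₃ is differentiable and satisfies Ψ'(x) = −Ψ(x)·U(λ;x) for all x. (ii) If Φ : ℝ → M_{n+1}(ℂ) is differentiable with Φ'(x) = U(λ;x)·Φ(x) for all x, then the function Ξ(x) = σ₃ Φ(x) σ₃ satisfies Ξ'(x) = U(−λ;x)·Ξ(x) for all x. -/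

import Mathlib

/-! Both identities reduce to the symmetries `σ₃ U(λ̄)^† σ₃ = -U(λ)` and `σ₃ U(λ) σ₃ = U(-λ)`,
which hold because `σ₃` is a Hermitian involution anticommuting with the Hermitian matrix `Q`;
differentiation commutes with conjugation by the constant matrix `σ₃` and with `†`. -/

open Matrix

/-- `σ₃ = diag(1, -1, …, -1)`: one `+1` followed by `n` entries `-1`. -/
def sigma3 (n : ℕ) : Matrix (Fin (n + 1)) (Fin (n + 1)) ℂ :=
  Matrix.diagonal fun i => if i = 0 then 1 else -1

/-- The potential matrix `Q` with zero diagonal block structure: first row `conj(q_j)`,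
first column `q_i`, all other entries `0`. -/
def Qmat (n : ℕ) (q : Fin n → ℂ) : Matrix (Fin (n + 1)) (Fin (n + 1)) ℂ :=
  Matrix.of fun i j =>
    if hi : i = 0 then
      if hj : j = 0 then 0 else (starRingEnd ℂ) (q (j.pred hj))
    else
      if j = 0 then q (i.pred hi) else 0

/-- The spatial Lax matrix `U(λ; x) = i λ⁻² σ₃ + λ⁻¹ Q(x)`. -/
noncomputable def Umat (n : ℕ) (q : Fin n → ℂ) (lam : ℂ) :
    Matrix (Fin (n + 1)) (Fin (n + 1)) ℂ :=
  (Complex.I * (lam ^ 2)⁻¹) • sigma3 n + lam⁻¹ • Qmat n q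

section EntrywiseDeriv

variable {𝕜 𝔸 : Type*} [NontriviallyNormedField 𝕜] [NormedRing 𝔸] [NormedAlgebra 𝕜 𝔸]
  {l m n p : Type*} [Fintype m] [Fintype n]

theorem hasDerivAt_mul_mul_apply (A : Matrix l m 𝔸) (B : Matrix n p 𝔸)
    {Φ : 𝕜 → Matrix m n 𝔸} {Φ' : Matrix m n 𝔸} {x : 𝕜}
    (hΦ : ∀ k k', HasDerivAt (fun y => Φ y k k') (Φ' k k') x) (i : l) (j : p) :
    HasDerivAt (fun y => (A * Φ y * B) i j) ((A * Φ' * B) i j) x := by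
  simp only [Matrix.mul_apply]
  exact HasDerivAt.fun_sum fun k' _ =>
    (HasDerivAt.fun_sum fun k _ => (hΦ k k').const_mul (A i k)).mul_const (B k' j)

end EntrywiseDeriv

theorem hasDerivAt_conjTranspose_apply {m n : Type*} {Φ : ℝ → Matrix m n ℂ}
    {Φ' : Matrix m n ℂ} {x : ℝ} (hΦ : ∀ k k', HasDerivAt (fun y => Φ y k k') (Φ' k k') x)
    (i : n) (j : m) :
    HasDerivAt (fun y => (Φ y)ᴴ i j) (Φ'ᴴ i j) x :=
  (hΦ j i).star

theorem mul_mul_mul_of_mul_self_eq_one {M : Type*} [Monoid M] {s : M} (hs : s * s = 1)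
    (a b : M) : s * (a * b) * s = (s * a * s) * (s * b * s) := by
  simp only [mul_assoc, ← mul_assoc s s, hs, one_mul]

theorem sigma3_mul_self (n : ℕ) : sigma3 n * sigma3 n = 1 := by
  rw [sigma3, diagonal_mul_diagonal, ← diagonal_one]
  congr 1
  funext i
  split_ifs <;> norm_num

theorem conjTranspose_sigma3 (n : ℕ) : (sigma3 n)ᴴ = sigma3 n := by
  rw [sigma3, diagonal_conjTranspose]
  congr 1
  funext i
  by_cases hi : i = 0 <;> simp [hi]

theorem conjTranspose_Qmat (n : ℕ) (q : Fin n → ℂ) : (Qmat n q)ᴴ = Qmat n q := by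
  ext i j
  by_cases hi : i = 0 <;> by_cases hj : j = 0 <;> simp [Qmat, hi, hj]

theorem sigma3_mul_Qmat_mul_sigma3 (n : ℕ) (q : Fin n → ℂ) :
    sigma3 n * Qmat n q * sigma3 n = -Qmat n q := by
  ext i j
  by_cases hi : i = 0 <;> by_cases hj : j = 0 <;> simp [sigma3, Qmat, hi, hj]

theorem sigma3_mul_smul_add_smul_mul_sigma3 (n : ℕ) (q : Fin n → ℂ) (a b : ℂ) :
    sigma3 n * (a • sigma3 n + b • Qmat n q) * sigma3 n = a • sigma3 n - b • Qmat n q := by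
  rw [mul_add, add_mul, Matrix.mul_smul, Matrix.smul_mul, Matrix.mul_smul, Matrix.smul_mul,
    sigma3_mul_self, one_mul, sigma3_mul_Qmat_mul_sigma3, smul_neg, sub_eq_add_neg]

theorem sigma3_mul_Umat_mul_sigma3 (n : ℕ) (q : Fin n → ℂ) (lam : ℂ) :
    sigma3 n * Umat n q lam * sigma3 n = Umat n q (-lam) := by
  rw [Umat, Umat, sigma3_mul_smul_add_smul_mul_sigma3, neg_sq, inv_neg, neg_smul,
    sub_eq_add_neg]

theorem sigma3_mul_conjTranspose_Umat_conj_mul_sigma3 (n : ℕ) (q : Fin n → ℂ) (lam : ℂ) :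
    sigma3 n * (Umat n q (starRingEnd ℂ lam))ᴴ * sigma3 n = -Umat n q lam := by
  have hcoeff : star (Complex.I * (starRingEnd ℂ lam ^ 2)⁻¹) = -(Complex.I * (lam ^ 2)⁻¹) := by
    simp [Complex.conj_I]
  rw [Umat, Umat, conjTranspose_add, conjTranspose_smul, conjTranspose_smul,
    conjTranspose_sigma3, conjTranspose_Qmat, sigma3_mul_smul_add_smul_mul_sigma3, hcoeff]
  simp only [star_inv₀, Complex.star_def, Complex.conj_conj, neg_smul]
  abel

theorem Umat_adjoint_solutions (n : ℕ) (q : ℝ → Fin n → ℂ)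
    (lam : ℂ) :
    (∀ Φ : ℝ → Matrix (Fin (n + 1)) (Fin (n + 1)) ℂ,
      (∀ (x : ℝ) (i j : Fin (n + 1)),
        HasDerivAt (fun y => Φ y i j) ((Umat n (q x) ((starRingEnd ℂ) lam) * Φ x) i j) x) →
      ∀ (x : ℝ) (i j : Fin (n + 1)),
        HasDerivAt (fun y => (sigma3 n * (Φ y)ᴴ * sigma3 n) i j)
          ((-((sigma3 n * (Φ x)ᴴ * sigma3 n) * Umat n (q x) lam)) i j) x) ∧
    (∀ Φ : ℝ → Matrix (Fin (n + 1)) (Fin (n + 1)) ℂ,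
      (∀ (x : ℝ) (i j : Fin (n + 1)),
        HasDerivAt (fun y => Φ y i j) ((Umat n (q x) lam * Φ x) i j) x) →
      ∀ (x : ℝ) (i j : Fin (n + 1)),
        HasDerivAt (fun y => (sigma3 n * Φ y * sigma3 n) i j)
          ((Umat n (q x) (-lam) * (sigma3 n * Φ x * sigma3 n)) i j) x) := by
  have hσ := sigma3_mul_self n
  refine ⟨fun Φ hΦ x i j => ?_, fun Φ hΦ x i j => ?_⟩
  · have hΨ' : sigma3 n * (Umat n (q x) (starRingEnd ℂ lam) * Φ x)ᴴ * sigma3 n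
        = -((sigma3 n * (Φ x)ᴴ * sigma3 n) * Umat n (q x) lam) := by
      rw [conjTranspose_mul, mul_mul_mul_of_mul_self_eq_one hσ,
        sigma3_mul_conjTranspose_Umat_conj_mul_sigma3, mul_neg]
    rw [← hΨ']
    exact hasDerivAt_mul_mul_apply _ _ (hasDerivAt_conjTranspose_apply (hΦ x)) i j
  · have hΞ' : sigma3 n * (Umat n (q x) lam * Φ x) * sigma3 n
        = Umat n (q x) (-lam) * (sigma3 n * Φ x * sigma3 n) := by
      rw [mul_mul_mul_of_mul_self_eq_one hσ, sigma3_mul_Umat_mul_sigma3]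
    rw [← hΞ']
    exact hasDerivAt_mul_mul_apply _ _ (hΦ x) i j
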